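/- If all components of the multi-index i are even, say i = 2u with u ∈ ℕ₀^d, then ∫_{B(0;r)} x^i dx = g(u) · r^{|i|+d} / (|i|+d), where g(u) = 2·Γ(u_1+1/2)···Γ(u_d+1/2) / Γ(u_1+···+u_d+d/2) and |i| = i_1+···+i_d. -/

import Mathlib

/-!
The monomial `x ^ (2u)` is homogeneous of degree `n = |2u|`. In polar coordinates its integral
over `B(0;r)` and its integral against `exp (-‖x‖²)` are the same spherical integral times the
radial factors `r ^ (n+d) / (n+d)` and `Γ((n+d)/2) / 2`, so the ball integral is expressed
through the Gaussian one. The latter splits over the coordinates into the one-dimensional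
moments `∫ t ^ (2k) exp (-t²) dt = Γ(k + 1/2)`.
-/

open MeasureTheory Set Metric Real Module

theorem integral_Ioi_pow_mul_exp_neg_sq (k : ℕ) :
    ∫ t in Ioi (0 : ℝ), t ^ k * exp (-t ^ 2) = Gamma ((k + 1) / 2) / 2 := by
  have h := integral_rpow_mul_exp_neg_rpow (p := 2) (q := k) two_pos
    (neg_one_lt_zero.trans_le k.cast_nonneg)
  simp only [rpow_natCast, rpow_two] at h
  rw [h]
  ring

theorem integral_pow_even_mul_exp_neg_sq (k : ℕ) :
    ∫ x : ℝ, x ^ (2 * k) * exp (-x ^ 2) = Gamma (k + 1 / 2) := by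
  have h := integral_comp_abs (f := fun t : ℝ => t ^ (2 * k) * exp (-t ^ 2))
  simp only [pow_mul, sq_abs] at h ⊢
  rw [h]
  simp only [← pow_mul]
  rw [integral_Ioi_pow_mul_exp_neg_sq]
  push_cast
  ring_nf

theorem integral_volumeIoiPow (k : ℕ) (G : ℝ → ℝ) :
    ∫ t, G t.1 ∂(Measure.volumeIoiPow k) = ∫ t in Ioi (0 : ℝ), t ^ k * G t := by
  simp only [Measure.volumeIoiPow, ENNReal.ofReal]
  rw [integral_withDensity_eq_integral_smul (measurable_subtype_coe.pow_const _).real_toNNReal,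
    integral_subtype_comap measurableSet_Ioi fun t => (t ^ k).toNNReal • G t]
  refine setIntegral_congr_fun measurableSet_Ioi fun t ht => ?_
  rw [NNReal.smul_def, Real.coe_toNNReal _ (pow_nonneg ht.out.le _), smul_eq_mul]

section Polar

variable {E : Type*} [NormedAddCommGroup E] [NormedSpace ℝ E] [Nontrivial E]
  [FiniteDimensional ℝ E] [MeasurableSpace E] [BorelSpace E] (μ : Measure E) [μ.IsAddHaarMeasure]

theorem integral_eq_integral_toSphere_prod_volumeIoiPow (g : E → ℝ) :
    ∫ x, g x ∂μ =
      ∫ p, g (p.2.1 • p.1.1) ∂(μ.toSphere.prod (Measure.volumeIoiPow (finrank ℝ E - 1))) := by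
  calc ∫ x, g x ∂μ = ∫ x : ({0}ᶜ : Set E), g x ∂(μ.comap (↑)) := by
        rw [integral_subtype_comap (measurableSet_singleton _).compl, restrict_compl_singleton]
    _ = _ := by
        rw [← μ.measurePreserving_homeomorphUnitSphereProd.integral_comp
          (Homeomorph.measurableEmbedding _)]
        simp only [← homeomorphUnitSphereProd_symm_apply_coe, Homeomorph.symm_apply_apply]

variable {f : E → ℝ} {n : ℕ}

theorem integral_mul_radial_of_homogeneous (hf : ∀ t : ℝ, 0 < t → ∀ x, f (t • x) = t ^ n * f x)
    (φ : ℝ → ℝ) :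
    ∫ x, f x * φ ‖x‖ ∂μ =
      (∫ y, f y ∂μ.toSphere) * ∫ t in Ioi (0 : ℝ), t ^ (n + (finrank ℝ E - 1)) * φ t := by
  have hpolar (p : sphere (0 : E) 1 × Ioi (0 : ℝ)) :
      f (p.2.1 • p.1.1) * φ ‖p.2.1 • p.1.1‖ = f p.1 * (p.2.1 ^ n * φ p.2.1) := by
    rw [hf _ p.2.2, norm_smul, norm_eq_of_mem_sphere p.1, mul_one, norm_of_nonneg p.2.2.out.le]
    ring
  simp only [integral_eq_integral_toSphere_prod_volumeIoiPow μ (fun x => f x * φ ‖x‖), hpolar,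
    integral_prod_mul (fun y : sphere (0 : E) 1 => f y) (fun t : Ioi (0 : ℝ) => t.1 ^ n * φ t.1),
    integral_volumeIoiPow _ fun t => t ^ n * φ t]
  congr 1
  refine setIntegral_congr_fun measurableSet_Ioi fun t _ => ?_
  ring

theorem setIntegral_closedBall_of_homogeneous
    (hf : ∀ t : ℝ, 0 < t → ∀ x, f (t • x) = t ^ n * f x) {r : ℝ} (hr : 0 ≤ r) :
    ∫ x in closedBall 0 r, f x ∂μ =
      (∫ y, f y ∂μ.toSphere) * (r ^ (n + finrank ℝ E) / (n + finrank ℝ E : ℕ)) := by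
  have hball : (closedBall (0 : E) r).indicator f = fun x => f x * (Iic r).indicator 1 ‖x‖ := by
    ext x
    by_cases hx : ‖x‖ ≤ r <;> simp [indicator, hx]
  have hradial : (fun t : ℝ => t ^ (n + (finrank ℝ E - 1)) * (Iic r).indicator 1 t) =
      (Iic r).indicator fun t => t ^ (n + (finrank ℝ E - 1)) := by
    ext t
    by_cases ht : t ≤ r <;> simp [indicator, ht]
  have hdim : n + (finrank ℝ E - 1) + 1 = n + finrank ℝ E := by
    rw [add_assoc, Nat.sub_add_cancel finrank_pos]
  rw [← integral_indicator measurableSet_closedBall, hball,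
    integral_mul_radial_of_homogeneous μ hf, hradial, setIntegral_indicator measurableSet_Iic,
    Ioi_inter_Iic, ← intervalIntegral.integral_of_le hr, integral_pow, ← Nat.cast_add_one, hdim,
    zero_pow (by omega), sub_zero]

theorem integral_mul_exp_neg_norm_sq_of_homogeneous
    (hf : ∀ t : ℝ, 0 < t → ∀ x, f (t • x) = t ^ n * f x) :
    ∫ x, f x * exp (-‖x‖ ^ 2) ∂μ =
      (∫ y, f y ∂μ.toSphere) * (Gamma ((n + finrank ℝ E : ℕ) / 2) / 2) := by
  have hdim : n + (finrank ℝ E - 1) + 1 = n + finrank ℝ E := by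
    rw [add_assoc, Nat.sub_add_cancel finrank_pos]
  rw [integral_mul_radial_of_homogeneous μ hf (fun t => exp (-t ^ 2)),
    integral_Ioi_pow_mul_exp_neg_sq, ← Nat.cast_add_one, hdim]

theorem setIntegral_closedBall_eq_integral_mul_exp_neg_norm_sq
    (hf : ∀ t : ℝ, 0 < t → ∀ x, f (t • x) = t ^ n * f x) {r : ℝ} (hr : 0 ≤ r) :
    ∫ x in closedBall 0 r, f x ∂μ =
      2 * (∫ x, f x * exp (-‖x‖ ^ 2) ∂μ) / Gamma ((n + finrank ℝ E : ℕ) / 2) *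
        r ^ (n + finrank ℝ E) / (n + finrank ℝ E : ℕ) := by
  have hdim : 0 < n + finrank ℝ E := Nat.add_pos_right _ finrank_pos
  have hGamma : Gamma ((n + finrank ℝ E : ℕ) / 2) ≠ 0 := (Gamma_pos_of_pos (by positivity)).ne'
  rw [setIntegral_closedBall_of_homogeneous μ hf hr,
    integral_mul_exp_neg_norm_sq_of_homogeneous μ hf]
  field_simp

end Polar

section Monomial

variable {ι : Type*} [Fintype ι]

theorem integral_prod_mul_exp_neg_norm_sq (g : ι → ℝ → ℝ) :
    ∫ x : EuclideanSpace ℝ ι, (∏ j, g j (x j)) * exp (-‖x‖ ^ 2) =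
      ∏ j, ∫ t, g j t * exp (-t ^ 2) := by
  rw [← (EuclideanSpace.volume_preserving_symm_measurableEquiv_toLp ι).symm.integral_comp',
    ← integral_fintype_prod_eq_prod]
  congr 1
  ext y
  rw [EuclideanSpace.norm_sq_eq, Finset.prod_mul_distrib, ← Finset.sum_neg_distrib, exp_sum]
  simp [sq_abs]

theorem prod_smul_apply_pow (k : ι → ℕ) (t : ℝ) (x : EuclideanSpace ℝ ι) :
    ∏ j, (t • x) j ^ k j = t ^ (∑ j, k j) * ∏ j, x j ^ k j := by
  simp only [PiLp.smul_apply, smul_eq_mul, mul_pow, Finset.prod_mul_distrib,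
    Finset.prod_pow_eq_pow_sum]

theorem integral_prod_pow_even_mul_exp_neg_norm_sq (u : ι → ℕ) :
    ∫ x : EuclideanSpace ℝ ι, (∏ j, x j ^ (2 * u j)) * exp (-‖x‖ ^ 2) =
      ∏ j, Gamma ((u j : ℝ) + 1 / 2) := by
  rw [integral_prod_mul_exp_neg_norm_sq fun j t => t ^ (2 * u j)]
  exact Finset.prod_congr rfl fun j _ => integral_pow_even_mul_exp_neg_sq (u j)

end Monomial

/-- If all components of the multi-index are even, say `i = 2u`, then
`∫_{B(0;r)} x^i dx = g(u) · r^{|i|+d} / (|i|+d)` where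
`g(u) = 2 Γ(u₁+1/2)⋯Γ(u_d+1/2) / Γ(u₁+⋯+u_d+d/2)`. -/
theorem integral_monomial_even
    (d : ℕ) (hd : 0 < d) (r : ℝ) (hr : 0 < r) (u : Fin d → ℕ) :
    ∫ x in Metric.closedBall (0 : EuclideanSpace ℝ (Fin d)) r, ∏ j, x j ^ (2 * u j) =
      (2 * (∏ j, Real.Gamma ((u j : ℝ) + 1 / 2)) /
          Real.Gamma ((∑ j, (u j : ℝ)) + d / 2)) *
        r ^ ((∑ j, 2 * u j) + d) / (((∑ j, 2 * u j) + d : ℕ) : ℝ) := by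
  have : Nonempty (Fin d) := Fin.pos_iff_nonempty.mp hd
  have hGammaArg : (((∑ j, 2 * u j) + d : ℕ) : ℝ) / 2 = (∑ j, (u j : ℝ)) + d / 2 := by
    push_cast
    rw [← Finset.mul_sum]
    ring
  rw [setIntegral_closedBall_eq_integral_mul_exp_neg_norm_sq volume
      (fun t _ x => prod_smul_apply_pow _ t x) hr.le,
    integral_prod_pow_even_mul_exp_neg_norm_sq, finrank_euclideanSpace_fin, hGammaArg]
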